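/- arXiv:1704.02137 — 2 statements merged into one kernel-verified Lean document; each statement's English description precedes it below -/
import Mathlib

section
/- Let ξ₁, ξ₂, … be i.i.d. real-valued random variables with common distribution function F_ξ ∈ 𝒞, and let η be a counting random variable independent of the sequence with E η^{p+1} < ∞ for some p > J⁺_{F_ξ}. Then the distribution function of S_{(η)} = max{S₀, S₁, …, S_η} (where Sₙ = ξ₁+⋯+ξₙ, S₀ = 0) belongs to 𝒞. -/
open Filter MeasureTheory ProbabilityTheory

/-- `T` is a consistently varying tail function: `lim_{y↑1} limsup_{x→∞} T(xy)/T(x) = 1`. -/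
def ConsistentlyVaryingTail (T : ℝ → ℝ) : Prop :=
  Tendsto (fun y : ℝ => limsup (fun x : ℝ => T (x * y) / T x) atTop)
    (nhdsWithin 1 (Set.Iio 1)) (nhds 1)

/-- `partialSum ξ n ω = ξ 1 ω + ⋯ + ξ n ω` (with `partialSum ξ 0 ω = 0`). -/
noncomputable def partialSum {Ω : Type*} (ξ : ℕ → Ω → ℝ) (n : ℕ) (ω : Ω) : ℝ :=
  ∑ k ∈ Finset.Icc 1 n, ξ k ω

/-- `maxSum ξ n ω = max {S₀, S₁, …, Sₙ}` where `Sₖ = partialSum ξ k ω`. -/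
noncomputable def maxSum {Ω : Type*} (ξ : ℕ → Ω → ℝ) (n : ℕ) (ω : Ω) : ℝ :=
  (Finset.range (n + 1)).sup' Finset.nonempty_range_add_one (fun k => partialSum ξ k ω)

/-!
Write `T` for the tail of `ξ 1`, and say that `f` has small increments with respect to `T` if for
every `ε > 0`, once `u < 1` is close enough to `1`, `f (u * x) - f x ≤ ε * T x` for all large `x`.
For a positive antitone `T` this is exactly membership of `T` in `𝒞`, and it passes to every
antitone `G ≥ q * T` with `q > 0`.

The tail of `S_{k+1} = S_k + ξ_{k+1}` is squeezed between the classical upper and lower bounds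
for sums of independent variables; their error terms are `o(T)` because `𝒞` implies dominated
variation, so that the tail of `S_k` is `O(T)`. By induction every `S_k` has small increments, and
so does `max (S_0, …, S_n)`, whose increments are bounded by those of the `S_k`. The tail of
`S_(η)` is the mixture `∑ P(η = n) P(max_{k ≤ n} S_k > x)`, bounded below by `P(η ≠ 0) T`. A Potter
bound coming from `p > J⁺` gives `P(max_{k ≤ n} S_k > x) ≤ K n^(p+1) T(x)` uniformly in `n`, so
`E η^(p+1) < ∞` makes the far part of the mixture uniformly negligible.
-/

open Set Topology Asymptotics

def SmallIncrementsWrt (T f : ℝ → ℝ) : Prop :=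
  ∀ ε > 0, ∀ᶠ u in 𝓝[<] (1 : ℝ), ∀ᶠ x in atTop, f (u * x) - f x ≤ ε * T x

namespace SmallIncrementsWrt

variable {T f g : ℝ → ℝ}

theorem zero (hT : ∀ x, 0 ≤ T x) : SmallIncrementsWrt T 0 := fun ε hε =>
  .of_forall fun _ => .of_forall fun x => by simpa using mul_nonneg hε.le (hT x)

theorem add (hf : SmallIncrementsWrt T f) (hg : SmallIncrementsWrt T g) :
    SmallIncrementsWrt T (f + g) := by
  intro ε hε
  filter_upwards [hf (ε / 2) (half_pos hε), hg (ε / 2) (half_pos hε)] with u hfu hgu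
  filter_upwards [hfu, hgu] with x hfx hgx
  simp only [Pi.add_apply]
  linarith

theorem const_mul (hT : ∀ x, 0 ≤ T x) (hf : SmallIncrementsWrt T f) {c : ℝ} (hc : 0 ≤ c) :
    SmallIncrementsWrt T (fun x => c * f x) := by
  intro ε hε
  filter_upwards [hf (ε / (c + 1)) (by positivity)] with u hu
  filter_upwards [hu] with x hx
  have hcε : c * (ε / (c + 1)) ≤ ε := by
    rw [mul_div_assoc', div_le_iff₀ (by positivity)]
    nlinarith
  calc c * f (u * x) - c * f x = c * (f (u * x) - f x) := by ring
    _ ≤ c * (ε / (c + 1)) * T x := by rw [mul_assoc]; exact mul_le_mul_of_nonneg_left hx hc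
    _ ≤ ε * T x := mul_le_mul_of_nonneg_right hcε (hT x)

theorem sum {ι : Type*} {s : Finset ι} {f : ι → ℝ → ℝ} (hT : ∀ x, 0 ≤ T x)
    (hf : ∀ i ∈ s, SmallIncrementsWrt T (f i)) :
    SmallIncrementsWrt T (fun x => ∑ i ∈ s, f i x) := by
  classical
  induction s using Finset.induction_on with
  | empty => exact zero hT
  | insert i s hi ih =>
    simp_rw [Finset.sum_insert hi]
    exact (hf i (s.mem_insert_self i)).add (ih fun j hj => hf j (Finset.mem_insert_of_mem hj))

theorem of_sub_le (hg : SmallIncrementsWrt T g)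
    (h : ∀ w z, 0 < w → w ≤ z → f w - f z ≤ g w - g z) : SmallIncrementsWrt T f := by
  intro ε hε
  filter_upwards [hg ε hε, Ioo_mem_nhdsLT zero_lt_one] with u hu hu01
  filter_upwards [hu, eventually_gt_atTop 0] with x hx hx0
  exact (h _ _ (mul_pos hu01.1 hx0) (mul_le_of_le_one_left hx0.le hu01.2.le)).trans hx

theorem tsum {f : ℕ → ℝ → ℝ} {c : ℕ → ℝ} (hT : ∀ x, 0 ≤ T x)
    (hf : ∀ n, SmallIncrementsWrt T (f n)) (hf_nonneg : ∀ n x, 0 ≤ f n x)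
    (hf_sum : ∀ x, Summable (fun n => f n x)) (hc : Summable c)
    (hdom : ∀ᶠ u in 𝓝[<] (1 : ℝ), ∀ᶠ x in atTop, ∀ n, f n (u * x) ≤ c n * T x) :
    SmallIncrementsWrt T (fun x => ∑' n, f n x) := by
  intro ε hε
  obtain ⟨M, hM⟩ : ∃ M, ∑' k, c (k + M) < ε / 2 :=
    ((tendsto_sum_nat_add c).eventually_lt_const (half_pos hε)).exists
  set ε' := ε / (2 * (M + 1))
  have hhead : ∀ᶠ u in 𝓝[<] (1 : ℝ), ∀ n ∈ Finset.range M,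
      ∀ᶠ x in atTop, f n (u * x) - f n x ≤ ε' * T x :=
    (eventually_all_finset _).2 fun n _ => hf n ε' (by positivity)
  filter_upwards [hhead, hdom] with u hu hdu
  rw [← eventually_all_finset] at hu
  filter_upwards [hu, hdu] with x hx hdx
  have hs := (hf_sum (u * x)).sub (hf_sum x)
  rw [← (hf_sum (u * x)).tsum_sub (hf_sum x), ← hs.sum_add_tsum_nat_add M]
  have head : ∑ n ∈ Finset.range M, (f n (u * x) - f n x) ≤ ε / 2 * T x :=
    calc _ ≤ ∑ n ∈ Finset.range M, ε' * T x := Finset.sum_le_sum hx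
      _ = M * ε' * T x := by simp [mul_assoc]
      _ ≤ ε / 2 * T x := by
        refine mul_le_mul_of_nonneg_right ?_ (hT x)
        rw [mul_div_assoc', div_le_div_iff₀ (by positivity) two_pos]
        nlinarith
  have tail : ∑' k, (f (k + M) (u * x) - f (k + M) x) ≤ ε / 2 * T x :=
    calc _ ≤ ∑' k, c (k + M) * T x :=
          Summable.tsum_le_tsum (fun k => by linarith [hdx (k + M), hf_nonneg (k + M) x])
            ((summable_nat_add_iff M).2 hs) (((summable_nat_add_iff M).2 hc).mul_right _)
      _ = (∑' k, c (k + M)) * T x := tsum_mul_right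
      _ ≤ ε / 2 * T x := mul_le_mul_of_nonneg_right hM.le (hT x)
  linarith

end SmallIncrementsWrt

namespace ConsistentlyVaryingTail

variable {T : ℝ → ℝ}

theorem smallIncrementsWrt_self (hC : ConsistentlyVaryingTail T) (hT : ∀ x, 0 < T x) :
    SmallIncrementsWrt T T := by
  intro ε hε
  filter_upwards [hC.eventually (Ioo_mem_nhds zero_lt_one (lt_add_of_pos_right 1 hε))] with u hu
  have hbdd : IsBoundedUnder (· ≤ ·) atTop (fun x => T (x * u) / T x) := by
    by_contra h
    exact hu.1.ne' (Real.limsup_of_not_isBoundedUnder h)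
  filter_upwards [eventually_lt_of_limsup_lt hu.2 hbdd] with x hx
  rw [div_lt_iff₀ (hT x), mul_comm x] at hx
  linarith

theorem isBigO_comp_mul (hC : ConsistentlyVaryingTail T) (hT_anti : Antitone T)
    (hT : ∀ x, 0 < T x) {c : ℝ} (hc : 0 < c) : (fun x => T (c * x)) =O[atTop] T := by
  obtain ⟨u, hu, hu01⟩ :=
    ((hC.smallIncrementsWrt_self hT 1 one_pos).and (Ioo_mem_nhdsLT zero_lt_one)).exists
  have hpow : ∀ k : ℕ, ∀ᶠ x in atTop, T (u ^ k * x) ≤ 2 ^ k * T x := by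
    intro k
    induction k with
    | zero => simp
    | succ k ih =>
      filter_upwards [hu, (tendsto_id.const_mul_atTop hu01.1).eventually ih] with x hx hkx
      calc T (u ^ (k + 1) * x) = T (u ^ k * (u * x)) := by ring_nf
        _ ≤ 2 ^ k * T (u * x) := hkx
        _ ≤ 2 ^ (k + 1) * T x := by rw [pow_succ, mul_assoc]; gcongr; linarith
  obtain ⟨k, hk⟩ := exists_pow_lt_of_lt_one hc hu01.2
  refine IsBigO.of_bound (2 ^ k) ?_
  filter_upwards [hpow k, eventually_ge_atTop 0] with x hx hx0
  rw [Real.norm_of_nonneg (hT _).le, Real.norm_of_nonneg (hT _).le]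
  exact (hT_anti (mul_le_mul_of_nonneg_right hk.le hx0)).trans hx

theorem exists_eventually_le_rpow_mul (hC : ConsistentlyVaryingTail T) (hT_anti : Antitone T)
    (hT : ∀ x, 0 < T x) {J p : ℝ}
    (hJ : Tendsto (fun y : ℝ =>
        -((1 / Real.log y) * Real.log (liminf (fun x : ℝ => T (x * y) / T x) atTop)))
      atTop (𝓝 J))
    (hp : J < p) : ∃ y > 1, ∀ᶠ x in atTop, T x ≤ y ^ p * T (x * y) := by
  obtain ⟨y, hyp, hy1⟩ := ((hJ.eventually_lt_const hp).and (eventually_gt_atTop 1)).exists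
  have hy0 : 0 < y := one_pos.trans hy1
  refine ⟨y, hy1, ?_⟩
  obtain ⟨K, hK⟩ := ((hC.isBigO_comp_mul hT_anti hT (inv_pos.2 hy0)).comp_tendsto
    (tendsto_id.atTop_mul_const hy0)).bound
  have hr_le : ∀ᶠ x in atTop, T (x * y) / T x ≤ 1 := by
    filter_upwards [eventually_ge_atTop 0] with x hx
    exact div_le_one_of_le₀ (hT_anti (le_mul_of_one_le_right hx hy1.le)) (hT x).le
  have hK' : ∀ᶠ x in atTop, T x ≤ K * T (x * y) := by
    filter_upwards [hK] with x hx
    rwa [Function.comp_apply, Function.comp_apply, id, mul_comm x, inv_mul_cancel_left₀ hy0.ne',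
      Real.norm_of_nonneg (hT _).le, Real.norm_of_nonneg (hT _).le, mul_comm y] at hx
  have hK0 : 0 < K := by
    obtain ⟨x, hx⟩ := hK'.exists
    exact pos_of_mul_pos_left ((hT x).trans_le hx) (hT _).le
  have hr_ge : ∀ᶠ x in atTop, K⁻¹ ≤ T (x * y) / T x := by
    filter_upwards [hK'] with x hx
    rw [inv_le_iff_one_le_mul₀' hK0, mul_div_assoc', le_div_iff₀ (hT x), one_mul]
    exact hx
  -- Since `Real.log 0 = 0`, the hypothesis on `J` says nothing unless the liminf is positive.
  have hlim : y ^ (-p) < liminf (fun x => T (x * y) / T x) atTop := by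
    have hL : 0 < liminf (fun x => T (x * y) / T x) atTop :=
      (inv_pos.2 hK0).trans_le
        (le_liminf_of_le (isCoboundedUnder_ge_of_eventually_le _ hr_le) hr_ge)
    rw [← Real.log_lt_log_iff (by positivity) hL, Real.log_rpow hy0]
    have hlog := Real.log_pos hy1
    rw [one_div, neg_lt, ← div_eq_inv_mul, lt_div_iff₀ hlog] at hyp
    linarith
  filter_upwards [eventually_lt_of_lt_liminf hlim (isBoundedUnder_of_eventually_ge
    (.of_forall fun x => div_nonneg (hT _).le (hT x).le))] with x hx
  rw [lt_div_iff₀ (hT x), Real.rpow_neg hy0.le, inv_mul_lt_iff₀ (by positivity)] at hx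
  exact hx.le

end ConsistentlyVaryingTail

section Potter

variable {T : ℝ → ℝ}

theorem le_rpow_mul_rpow_mul_of_le_rpow_mul (hT_anti : Antitone T) (hT : ∀ x, 0 ≤ T x)
    {y p x₁ : ℝ} (hy : 1 < y) (hp : 0 ≤ p) (hx₁ : 0 ≤ x₁)
    (hstep : ∀ x, x₁ ≤ x → T x ≤ y ^ p * T (x * y)) {t : ℝ} (ht : 1 ≤ t) {x : ℝ}
    (hx : x₁ ≤ x) : T x ≤ y ^ p * t ^ p * T (x * t) := by
  obtain ⟨m, hm⟩ := pow_unbounded_of_one_lt t hy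
  have hy0 : 0 < y := one_pos.trans hy
  have hx0 : 0 ≤ x := hx₁.trans hx
  induction m generalizing t x with
  | zero => exact absurd hm (by simpa using ht)
  | succ m ih =>
    by_cases hty : t ≤ y
    · calc T x ≤ y ^ p * T (x * y) := hstep x hx
        _ ≤ y ^ p * t ^ p * T (x * t) := by
          rw [mul_assoc]
          gcongr
          exact (hT_anti (mul_le_mul_of_nonneg_left hty hx0)).trans
            (le_mul_of_one_le_left (hT _) (Real.one_le_rpow ht hp))
    · rw [not_le] at hty
      have hxy : x₁ ≤ x * y := hx.trans (le_mul_of_one_le_right hx0 hy.le)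
      have hty' : 1 ≤ t / y := (one_le_div hy0).2 hty.le
      have htm : t / y < y ^ m := by rw [div_lt_iff₀ hy0, ← pow_succ]; exact hm
      calc T x ≤ y ^ p * T (x * y) := hstep x hx
        _ ≤ y ^ p * (y ^ p * (t / y) ^ p * T (x * y * (t / y))) := by
          gcongr; exact ih hty' hxy htm (hx₁.trans hxy)
        _ = y ^ p * t ^ p * T (x * t) := by
          rw [← mul_assoc (y ^ p), ← Real.mul_rpow hy0.le (by positivity),
            mul_div_cancel₀ t hy0.ne', mul_assoc x, mul_div_cancel₀ t hy0.ne']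

theorem natCast_mul_le_of_potter (hT : ∀ x, 0 < T x) (hT1 : ∀ x, T x ≤ 1)
    {C p x₁ : ℝ} (hp : 0 ≤ p) (hx₁ : 0 < x₁)
    (hpotter : ∀ t, 1 ≤ t → ∀ x, x₁ ≤ x → T x ≤ C * t ^ p * T (x * t)) (n : ℕ) {x : ℝ}
    (hx : x₁ ≤ x) : n * T (x / n) ≤ C / T x₁ * n ^ (p + 1) * T x := by
  have hC : 1 ≤ C := by
    simpa [le_mul_iff_one_le_left (hT x₁)] using hpotter 1 le_rfl x₁ le_rfl
  have hx0 : 0 < x := hx₁.trans_le hx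
  rcases n.eq_zero_or_pos with rfl | hn
  · simp only [CharP.cast_eq_zero, zero_mul]
    have := hT x₁
    have := hT x
    positivity
  have hn1 : (1 : ℝ) ≤ n := Nat.one_le_cast.2 hn
  have hn0 : (0 : ℝ) < n := by positivity
  have hrpow : (n : ℝ) ^ (p + 1) = n * n ^ p := by rw [Real.rpow_add_one hn0.ne', mul_comm]
  by_cases hcase : x₁ ≤ x / n
  · have h := hpotter n hn1 (x / n) hcase
    rw [div_mul_cancel₀ x hn0.ne'] at h
    calc (n : ℝ) * T (x / n) ≤ n * (C * n ^ p * T x) := by gcongr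
      _ = C * n ^ (p + 1) * T x := by rw [hrpow]; ring
      _ ≤ C / T x₁ * n ^ (p + 1) * T x := by
        have := (hT x).le
        gcongr
        exact le_div_self (zero_le_one.trans hC) (hT x₁) (hT1 x₁)
  · rw [not_le, div_lt_iff₀ hn0, ← div_lt_iff₀' hx₁] at hcase
    have h := hpotter (x / x₁) ((one_le_div hx₁).2 hx) x₁ le_rfl
    rw [mul_div_cancel₀ x hx₁.ne'] at h
    have h1 : T x₁ ≤ C * n ^ p * T x :=
      h.trans (by gcongr; exact (hT x).le)
    calc (n : ℝ) * T (x / n) ≤ n := mul_le_of_le_one_right hn0.le (hT1 _)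
      _ ≤ n * (C * n ^ p * T x / T x₁) :=
        le_mul_of_one_le_right hn0.le ((one_le_div (hT x₁)).2 h1)
      _ = C / T x₁ * n ^ (p + 1) * T x := by rw [hrpow]; ring

theorem ConsistentlyVaryingTail.exists_natCast_mul_le (hC : ConsistentlyVaryingTail T)
    (hT_anti : Antitone T) (hT : ∀ x, 0 < T x) (hT1 : ∀ x, T x ≤ 1) {J p : ℝ}
    (hJ : Tendsto (fun y : ℝ =>
        -((1 / Real.log y) * Real.log (liminf (fun x : ℝ => T (x * y) / T x) atTop)))
      atTop (𝓝 J))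
    (hp : J < p) :
    ∃ K x₁, 0 < x₁ ∧ ∀ (n : ℕ) (x : ℝ), x₁ ≤ x → n * T (x / n) ≤ K * n ^ (p + 1) * T x := by
  obtain ⟨y, hy, hstep⟩ := hC.exists_eventually_le_rpow_mul hT_anti hT hJ hp
  obtain ⟨x₀, hx₀⟩ := eventually_atTop.1 hstep
  set x₁ := max x₀ 1
  have hx₁ : 0 < x₁ := lt_max_of_lt_right one_pos
  have hstep' : ∀ x, x₁ ≤ x → T x ≤ y ^ p * T (x * y) := fun x hx =>
    hx₀ x ((le_max_left _ _).trans hx)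
  have hp0 : 0 ≤ p := by
    by_contra! hneg
    have h := hstep' x₁ le_rfl
    have hy1 : y ^ p < 1 := Real.rpow_lt_one_of_one_lt_of_neg hy hneg
    have hTy : T (x₁ * y) ≤ T x₁ := hT_anti (le_mul_of_one_le_right hx₁.le hy.le)
    nlinarith [hT (x₁ * y)]
  exact ⟨_, x₁, hx₁, natCast_mul_le_of_potter hT hT1 hp0 hx₁ fun t ht x hx =>
    le_rpow_mul_rpow_mul_of_le_rpow_mul hT_anti (fun x => (hT x).le) hy hp0 hx₁.le hstep' ht hx⟩

end Potter

theorem consistentlyVaryingTail_of_smallIncrementsWrt {T G : ℝ → ℝ} (hG : Antitone G)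
    (hT : ∀ x, 0 < T x) {q : ℝ} (hq : 0 < q) (hGT : ∀ x, q * T x ≤ G x)
    (h : SmallIncrementsWrt T G) : ConsistentlyVaryingTail G := by
  rw [ConsistentlyVaryingTail, Metric.tendsto_nhds]
  intro ε hε
  have hG0 : ∀ x, 0 < G x := fun x => (mul_pos hq (hT x)).trans_le (hGT x)
  filter_upwards [h (q * (ε / 2)) (by positivity), self_mem_nhdsWithin] with u hu (hu1 : u < 1)
  have hbounds : ∀ᶠ x in atTop, 1 ≤ G (x * u) / G x ∧ G (x * u) / G x ≤ 1 + ε / 2 := by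
    filter_upwards [hu, eventually_ge_atTop 0] with x hx hx0
    rw [mul_comm x, one_le_div (hG0 x), div_le_iff₀ (hG0 x)]
    refine ⟨hG (mul_le_of_le_one_left hx0 hu1.le), ?_⟩
    nlinarith [hGT x]
  have hlow := hbounds.mono fun _ h => h.1
  have hupp := hbounds.mono fun _ h => h.2
  have h1 : 1 ≤ limsup (fun x => G (x * u) / G x) atTop :=
    le_limsup_of_frequently_le hlow.frequently ⟨_, eventually_map.2 hupp⟩
  have h2 : limsup (fun x => G (x * u) / G x) atTop ≤ 1 + ε / 2 :=
    limsup_le_of_le (isCoboundedUnder_le_of_eventually_le _ hlow) hupp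
  rw [Real.dist_eq, abs_lt]
  constructor <;> linarith

theorem ConsistentlyVaryingTail.eventually_comp_mul_mul_le {T f g : ℝ → ℝ}
    (hC : ConsistentlyVaryingTail T) (hT_anti : Antitone T) (hT : ∀ x, 0 < T x)
    (hf : f =O[atTop] T) (hg : Tendsto g atTop (𝓝 0)) {c d : ℝ} (hc : 0 < c) (hd : 0 < d)
    {ε : ℝ} (hε : 0 < ε) : ∀ᶠ x in atTop, f (c * x) * g (d * x) ≤ ε * T x := by
  have hscale : ∀ a : ℝ, 0 < a → Tendsto (fun x => a * x) atTop atTop := fun a ha =>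
    (tendsto_const_mul_atTop_of_pos ha).2 tendsto_id
  have ho : (fun x => f (c * x) * g (d * x)) =o[atTop] T := by
    have hfc := (hf.comp_tendsto (hscale c hc)).trans (hC.isBigO_comp_mul hT_anti hT hc)
    simpa using hfc.mul_isLittleO ((isLittleO_one_iff ℝ).2 (hg.comp (hscale d hd)))
  filter_upwards [ho.bound hε] with x hx
  rw [Real.norm_eq_abs, Real.norm_of_nonneg (hT x).le] at hx
  exact (le_abs_self _).trans hx

/-- `H'` is the tail of `X + Y` for independent `X`, `Y` with tails `H`, `T`, where
`A s = P(Y ≥ -s)` and `A' s = P(X ≥ -s)`. -/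
theorem SmallIncrementsWrt.of_tail_add_bounds {T H H' A A' : ℝ → ℝ}
    (hC : ConsistentlyVaryingTail T) (hT_anti : Antitone T) (hT : ∀ x, 0 < T x)
    (hT0 : Tendsto T atTop (𝓝 0)) (hH : SmallIncrementsWrt T H) (hHO : H =O[atTop] T)
    (hA : Tendsto A atTop (𝓝 1)) (hA' : Tendsto A' atTop (𝓝 1))
    (hup : ∀ w s, H' w ≤ H (w - s) + T (w - s) + H s * T s)
    (hlow : ∀ w s, H (w + s) * A s + T (w + s) * A' s - H (w + s) * T (w + s) ≤ H' w) :
    SmallIncrementsWrt T H' := by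
  -- Compare `hup` at `u * x` with `hlow` at `x`, both with `s = δ * x`: the main terms differ by
  -- increments of `H` and `T` at `(1 + δ) * x` with ratio `(u - δ) / (1 + δ)`, close to `1`, and
  -- the four product terms are `o(T)`.
  intro ε hε
  have he : 0 < ε / 6 := by positivity
  obtain ⟨u₀, hu₀, hgood⟩ : ∃ u₀ ∈ Ico (0 : ℝ) 1, ∀ v ∈ Ioo u₀ 1, ∀ᶠ x in atTop,
      H (v * x) - H x ≤ ε / 6 * T x ∧ T (v * x) - T x ≤ ε / 6 * T x := by
    obtain ⟨l, hl, hsub⟩ := mem_nhdsLT_iff_exists_Ioo_subset.1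
      ((hH _ he).and (hC.smallIncrementsWrt_self hT _ he))
    exact ⟨max l 0, ⟨le_max_right _ _, max_lt hl one_pos⟩, fun v hv =>
      (hsub ⟨(le_max_left _ _).trans_lt hv.1, hv.2⟩).1.and
        (hsub ⟨(le_max_left _ _).trans_lt hv.1, hv.2⟩).2⟩
  obtain ⟨δ, hδ, hδu₀⟩ : ∃ δ > 0, u₀ * (1 + δ) + δ < 1 :=
    ⟨(1 - u₀) / 4, by linarith [hu₀.2], by nlinarith [hu₀.1, hu₀.2]⟩
  have hw : 0 < 1 + δ := by linarith
  have hA0 : ∀ {B : ℝ → ℝ}, Tendsto B atTop (𝓝 1) → Tendsto (fun s => 1 - B s) atTop (𝓝 0) :=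
    fun hB => by simpa using (tendsto_const_nhds (x := (1 : ℝ))).sub hB
  have e1 := hC.eventually_comp_mul_mul_le hT_anti hT hHO hT0 hδ hδ he
  have e2 := hC.eventually_comp_mul_mul_le hT_anti hT hHO (hA0 hA) hw hδ he
  have e3 := hC.eventually_comp_mul_mul_le hT_anti hT (isBigO_refl T _) (hA0 hA') hw hδ he
  have e4 := hC.eventually_comp_mul_mul_le hT_anti hT hHO hT0 hw hw he
  filter_upwards [Ioo_mem_nhdsLT hδu₀] with u hu
  have hv : (u - δ) / (1 + δ) ∈ Ioo u₀ 1 :=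
    ⟨by rw [lt_div_iff₀ hw]; linarith [hu.1], by rw [div_lt_one hw]; linarith [hu.2]⟩
  have hscale : Tendsto (fun x => (1 + δ) * x) atTop atTop := tendsto_id.const_mul_atTop hw
  filter_upwards [hscale.eventually (hgood _ hv), e1, e2, e3, e4, eventually_ge_atTop 0]
    with x ⟨hHv, hTv⟩ h1 h2 h3 h4 hx0
  have hvx : (u - δ) / (1 + δ) * ((1 + δ) * x) = u * x - δ * x := by field_simp
  rw [hvx] at hHv hTv
  have hTw : ε / 6 * T ((1 + δ) * x) ≤ ε / 6 * T x :=
    mul_le_mul_of_nonneg_left (hT_anti (le_mul_of_one_le_left hx0 (by linarith))) he.le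
  have hup' := hup (u * x) (δ * x)
  have hlow' := hlow x (δ * x)
  rw [show x + δ * x = (1 + δ) * x by ring] at hlow'
  linarith

section Tail

variable {Ω : Type*} [MeasurableSpace Ω]

theorem ProbabilityTheory.IndepFun.measureReal_inter_preimage_eq_mul {β γ : Type*}
    [MeasurableSpace β] [MeasurableSpace γ] {μ : Measure Ω} {f : Ω → β} {g : Ω → γ}
    (hfg : IndepFun f g μ) {s : Set β} {t : Set γ} (hs : MeasurableSet s) (ht : MeasurableSet t) :
    μ.real (f ⁻¹' s ∩ g ⁻¹' t) = μ.real (f ⁻¹' s) * μ.real (g ⁻¹' t) := by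
  rw [Measure.real, hfg.measure_inter_preimage_eq_mul _ _ hs ht, ENNReal.toReal_mul]
  rfl

theorem measureReal_compl_pos {μ : Measure Ω} [IsProbabilityMeasure μ] {s : Set Ω}
    (hs : MeasurableSet s) (h : μ s ≠ 1) : 0 < μ.real sᶜ := by
  have h1 : μ.real s < 1 :=
    measureReal_le_one.lt_of_ne (by rwa [Ne, Measure.real, ENNReal.toReal_eq_one_iff])
  rw [probReal_compl_eq_one_sub hs]
  linarith

noncomputable def tailProb (μ : Measure Ω) (X : Ω → ℝ) (x : ℝ) : ℝ :=
  μ.real {ω | X ω > x}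

variable {μ : Measure Ω} {X Y : Ω → ℝ}

theorem tailProb_nonneg (x : ℝ) : 0 ≤ tailProb μ X x := measureReal_nonneg

theorem tailProb_le_one [IsProbabilityMeasure μ] (x : ℝ) : tailProb μ X x ≤ 1 :=
  measureReal_le_one

theorem tailProb_antitone [IsFiniteMeasure μ] (X : Ω → ℝ) : Antitone (tailProb μ X) :=
  fun _ _ hab => measureReal_mono fun _ hω => hab.trans_lt hω

theorem ProbabilityTheory.IdentDistrib.tailProb_eq {Ω' : Type*} [MeasurableSpace Ω']
    {ν : Measure Ω'} {Y : Ω' → ℝ} (h : IdentDistrib X Y μ ν) : tailProb μ X = tailProb ν Y :=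
  funext fun _ => congrArg ENNReal.toReal (h.measure_mem_eq measurableSet_Ioi)

theorem tendsto_tailProb_atTop [IsFiniteMeasure μ] (hX : Measurable X) :
    Tendsto (tailProb μ X) atTop (𝓝 0) := by
  have h := tendsto_measure_iInter_atTop (μ := μ) (s := fun x : ℝ => {ω | X ω > x})
    (fun _ => (measurableSet_lt measurable_const hX).nullMeasurableSet)
    (fun _ _ hab _ hω => hab.trans_lt hω) ⟨0, measure_ne_top μ _⟩
  have hempty : ⋂ x : ℝ, {ω | X ω > x} = ∅ :=
    eq_empty_of_forall_notMem fun ω hω => lt_irrefl (X ω) (mem_iInter.1 hω (X ω))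
  rw [hempty, measure_empty] at h
  exact ENNReal.toReal_zero ▸ (ENNReal.tendsto_toReal ENNReal.zero_ne_top).comp h

theorem tendsto_measureReal_neg_le_atTop [IsProbabilityMeasure μ] :
    Tendsto (fun s => μ.real {ω | -s ≤ X ω}) atTop (𝓝 1) := by
  have h := tendsto_measure_iUnion_atTop (μ := μ) (s := fun s : ℝ => {ω | -s ≤ X ω})
    fun _ _ hab _ hω => (neg_le_neg hab).trans hω
  have huniv : ⋃ s : ℝ, {ω | -s ≤ X ω} = univ :=
    eq_univ_of_forall fun ω => mem_iUnion.2 ⟨-X ω, by simp⟩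
  rw [huniv, measure_univ] at h
  exact ENNReal.toReal_one ▸ (ENNReal.tendsto_toReal ENNReal.one_ne_top).comp h

theorem tailProb_sub_tailProb [IsFiniteMeasure μ] (hX : Measurable X) {w z : ℝ} (hwz : w ≤ z) :
    tailProb μ X w - tailProb μ X z = μ.real ({ω | X ω > w} \ {ω | X ω > z}) :=
  (measureReal_sdiff (fun _ hω => hwz.trans_lt hω) (measurableSet_lt measurable_const hX)).symm

theorem tailProb_add_le [IsFiniteMeasure μ] (hXY : IndepFun X Y μ) (w s : ℝ) :
    tailProb μ (X + Y) w ≤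
      tailProb μ X (w - s) + tailProb μ Y (w - s) + tailProb μ X s * tailProb μ Y s := by
  have hsub : {ω | (X + Y) ω > w} ⊆
      ({ω | X ω > w - s} ∪ {ω | Y ω > w - s}) ∪ ({ω | X ω > s} ∩ {ω | Y ω > s}) := by
    intro ω (hω : w < X ω + Y ω)
    by_contra h
    simp only [mem_union, mem_inter_iff, mem_ofPred_eq, not_or, not_and, not_lt] at h
    rcases le_or_gt (X ω) s with hX | hX
    · linarith [h.1.2]
    · linarith [h.1.1, h.2 hX]
  have hprod : μ.real ({ω | X ω > s} ∩ {ω | Y ω > s}) = tailProb μ X s * tailProb μ Y s :=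
    hXY.measureReal_inter_preimage_eq_mul measurableSet_Ioi measurableSet_Ioi
  calc tailProb μ (X + Y) w ≤ μ.real (({ω | X ω > w - s} ∪ {ω | Y ω > w - s}) ∪
        ({ω | X ω > s} ∩ {ω | Y ω > s})) := measureReal_mono hsub
    _ ≤ _ := (measureReal_union_le _ _).trans (add_le_add_left (measureReal_union_le _ _) _)
    _ = _ := by rw [hprod]; rfl

theorem le_tailProb_add [IsFiniteMeasure μ] (hXY : IndepFun X Y μ) (hX : Measurable X)
    (hY : Measurable Y) (w s : ℝ) :
    tailProb μ X (w + s) * μ.real {ω | -s ≤ Y ω} + tailProb μ Y (w + s) * μ.real {ω | -s ≤ X ω}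
      - tailProb μ X (w + s) * tailProb μ Y (w + s) ≤ tailProb μ (X + Y) w := by
  set A := {ω | X ω > w + s} ∩ {ω | -s ≤ Y ω}
  set B := {ω | Y ω > w + s} ∩ {ω | -s ≤ X ω}
  have hA : μ.real A = tailProb μ X (w + s) * μ.real {ω | -s ≤ Y ω} :=
    hXY.measureReal_inter_preimage_eq_mul measurableSet_Ioi measurableSet_Ici
  have hB : μ.real B = tailProb μ Y (w + s) * μ.real {ω | -s ≤ X ω} :=
    hXY.symm.measureReal_inter_preimage_eq_mul measurableSet_Ioi measurableSet_Ici
  have hAB : μ.real (A ∩ B) ≤ tailProb μ X (w + s) * tailProb μ Y (w + s) :=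
    (measureReal_mono (show A ∩ B ⊆ {ω | X ω > w + s} ∩ {ω | Y ω > w + s} from
      fun _ h => ⟨h.1.1, h.2.1⟩)).trans_eq
      (hXY.measureReal_inter_preimage_eq_mul measurableSet_Ioi measurableSet_Ioi)
  have hunion : μ.real (A ∪ B) ≤ tailProb μ (X + Y) w := by
    refine measureReal_mono ?_
    rintro ω (⟨h1, h2⟩ | ⟨h1, h2⟩)
    · exact show w < X ω + Y ω from by linarith [show w + s < X ω from h1, show -s ≤ Y ω from h2]
    · exact show w < X ω + Y ω from by linarith [show w + s < Y ω from h1, show -s ≤ X ω from h2]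
  have := measureReal_union_add_inter (μ := μ) (s := A) (t := B)
    ((measurableSet_lt measurable_const hY).inter (measurableSet_le measurable_const hX))
  linarith

theorem summable_measureReal_setOf_eq [IsFiniteMeasure μ] {η : Ω → ℕ} (hη : Measurable η) :
    Summable fun n => μ.real {ω | η ω = n} :=
  summable_measure_toReal (fun n => hη (measurableSet_singleton n))
    fun _ _ hmn => Set.disjoint_left.2 fun _ h1 h2 => hmn (h1.symm.trans h2)

theorem tailProb_comp_eq_tsum [IsFiniteMeasure μ] {β : Type*} [MeasurableSpace β] {η : Ω → ℕ}
    {V : Ω → β} {g : ℕ → β → ℝ} (hη : Measurable η) (hV : Measurable V)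
    (hg : ∀ n, Measurable (g n)) (hind : IndepFun η V μ) (x : ℝ) :
    tailProb μ (fun ω => g (η ω) (V ω)) x =
      ∑' n, μ.real {ω | η ω = n} * tailProb μ (fun ω => g n (V ω)) x := by
  have hset : {ω | g (η ω) (V ω) > x} = ⋃ n, ({ω | η ω = n} ∩ {ω | g n (V ω) > x}) := by
    ext ω
    simp
  have hmeas : ∀ n, MeasurableSet ({ω | η ω = n} ∩ {ω | g n (V ω) > x}) := fun n =>
    (hη (measurableSet_singleton n)).inter (measurableSet_lt measurable_const ((hg n).comp hV))
  have hdisj : Pairwise (Function.onFun Disjoint fun n => {ω | η ω = n} ∩ {ω | g n (V ω) > x}) :=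
    fun _ _ hmn => Set.disjoint_left.2 fun _ h1 h2 => hmn (h1.1.symm.trans h2.1)
  rw [tailProb, hset, Measure.real, measure_iUnion hdisj hmeas,
    ENNReal.tsum_toReal_eq fun _ => measure_ne_top _ _]
  congr 1
  funext n
  exact hind.measureReal_inter_preimage_eq_mul (measurableSet_singleton n)
    (measurableSet_lt measurable_const (hg n))

end Tail

section PartialSums

variable {Ω : Type*} {ξ : ℕ → Ω → ℝ}

theorem partialSum_zero : partialSum ξ 0 = 0 := by
  funext ω
  simp [partialSum]

theorem partialSum_one : partialSum ξ 1 = ξ 1 := by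
  funext ω
  simp [partialSum]

theorem partialSum_succ (k : ℕ) : partialSum ξ (k + 1) = partialSum ξ k + ξ (k + 1) := by
  funext ω
  simp [partialSum, Finset.sum_Icc_succ_top (Nat.le_add_left 1 k)]

theorem partialSum_le_maxSum {k n : ℕ} (hk : k ≤ n) (ω : Ω) :
    partialSum ξ k ω ≤ maxSum ξ n ω :=
  Finset.le_sup' (fun j => partialSum ξ j ω) (Finset.mem_range.2 (Nat.lt_succ_of_le hk))

theorem exists_lt_of_lt_partialSum {j : ℕ} (hj : 1 ≤ j) {z : ℝ} {ω : Ω}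
    (h : z < partialSum ξ j ω) : ∃ i ∈ Finset.Icc 1 j, z / j < ξ i ω := by
  refine Finset.exists_lt_of_sum_lt ?_
  rwa [Finset.sum_const, Nat.card_Icc, Nat.add_sub_cancel, nsmul_eq_mul,
    mul_div_cancel₀ _ (by positivity)]

theorem exists_partialSum_eq_maxSum {n : ℕ} {z : ℝ} (hz : 0 < z) {ω : Ω}
    (h : z < maxSum ξ n ω) : ∃ j ∈ Finset.Icc 1 n, partialSum ξ j ω = maxSum ξ n ω := by
  obtain ⟨j, hj, hje⟩ :=
    Finset.exists_mem_eq_sup' Finset.nonempty_range_add_one fun k => partialSum ξ k ω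
  refine ⟨j, Finset.mem_Icc.2 ⟨Nat.one_le_iff_ne_zero.2 ?_,
    Nat.lt_succ_iff.1 (Finset.mem_range.1 hj)⟩, hje.symm⟩
  rintro rfl
  rw [maxSum, hje, partialSum_zero] at h
  exact hz.not_gt h

variable [MeasurableSpace Ω]

theorem measurable_partialSum (hξ : ∀ k, Measurable (ξ k)) (k : ℕ) :
    Measurable (partialSum ξ k) :=
  Finset.measurable_sum _ fun i _ => hξ i

theorem measurable_maxSum (hξ : ∀ k, Measurable (ξ k)) (n : ℕ) : Measurable (maxSum ξ n) :=
  Finset.measurable_range_sup'' fun k _ => measurable_partialSum hξ k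

theorem indepFun_partialSum_succ {μ : Measure Ω} (hξ : ∀ k, Measurable (ξ k))
    (hindep : iIndepFun ξ μ) (k : ℕ) : IndepFun (partialSum ξ k) (ξ (k + 1)) μ := by
  convert hindep.indepFun_finsetSum_of_notMem hξ (show k + 1 ∉ Finset.Icc 1 k by simp) using 1
  funext ω
  simp [partialSum]

variable {μ : Measure Ω} [IsFiniteMeasure μ]

theorem tailProb_maxSum_le_sum {x : ℝ} (hx : 0 < x) (n : ℕ) :
    tailProb μ (maxSum ξ n) x ≤ ∑ i ∈ Finset.Icc 1 n, tailProb μ (ξ i) (x / n) := by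
  refine (measureReal_mono ?_ (measure_ne_top _ _)).trans (measureReal_biUnion_finset_le _ _)
  intro ω (hω : x < maxSum ξ n ω)
  obtain ⟨j, hj, hje⟩ := exists_partialSum_eq_maxSum hx hω
  obtain ⟨hj1, hjn⟩ := Finset.mem_Icc.1 hj
  obtain ⟨i, hi, hlt⟩ := exists_lt_of_lt_partialSum hj1 (hje ▸ hω)
  have hdiv : x / n ≤ x / j :=
    div_le_div_of_nonneg_left hx.le (by exact_mod_cast hj1) (by exact_mod_cast hjn)
  exact mem_biUnion (Finset.mem_Icc.2 ⟨(Finset.mem_Icc.1 hi).1, (Finset.mem_Icc.1 hi).2.trans hjn⟩)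
    (hdiv.trans_lt hlt)

theorem tailProb_maxSum_le (hid : ∀ k, 1 ≤ k → IdentDistrib (ξ k) (ξ 1) μ μ) {x : ℝ}
    (hx : 0 < x) (n : ℕ) : tailProb μ (maxSum ξ n) x ≤ n * tailProb μ (ξ 1) (x / n) := by
  refine (tailProb_maxSum_le_sum hx n).trans_eq ?_
  rw [Finset.sum_congr rfl fun i hi => congrFun (hid i (Finset.mem_Icc.1 hi).1).tailProb_eq _,
    Finset.sum_const, Nat.card_Icc, Nat.add_sub_cancel, nsmul_eq_mul]

theorem tailProb_maxSum_sub_le (hξ : ∀ k, Measurable (ξ k)) (n : ℕ) {w z : ℝ} (hw : 0 < w)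
    (hwz : w ≤ z) :
    tailProb μ (maxSum ξ n) w - tailProb μ (maxSum ξ n) z ≤
      ∑ k ∈ Finset.Icc 1 n, (tailProb μ (partialSum ξ k) w - tailProb μ (partialSum ξ k) z) := by
  rw [tailProb_sub_tailProb (measurable_maxSum hξ n) hwz]
  refine (measureReal_mono ?_ (measure_ne_top _ _)).trans
    ((measureReal_biUnion_finset_le _ _).trans_eq (Finset.sum_congr rfl fun k _ =>
      (tailProb_sub_tailProb (measurable_partialSum hξ k) hwz).symm))
  rintro ω ⟨hω1, hω2⟩
  obtain ⟨j, hj, hje⟩ := exists_partialSum_eq_maxSum hw hω1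
  exact mem_biUnion hj ⟨show w < partialSum ξ j ω by rw [hje]; exact hω1,
    fun h => hω2 (show z < maxSum ξ n ω by rw [← hje]; exact h)⟩

theorem measureReal_ne_zero_mul_tailProb_le {η : Ω → ℕ} (hind : IndepFun η (ξ 1) μ) (x : ℝ) :
    μ.real {ω | η ω ≠ 0} * tailProb μ (ξ 1) x ≤ tailProb μ (fun ω => maxSum ξ (η ω) ω) x := by
  refine (hind.measureReal_inter_preimage_eq_mul (measurableSet_singleton 0).compl
    measurableSet_Ioi).symm.trans_le (measureReal_mono ?_)
  rintro ω ⟨h1, h2⟩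
  have := partialSum_le_maxSum (ξ := ξ) (Nat.one_le_iff_ne_zero.2 h1) ω
  rw [partialSum_one] at this
  exact lt_of_lt_of_le h2 this

end PartialSums

section RandomWalk

variable {Ω : Type*} [MeasurableSpace Ω] {μ : Measure Ω} [IsProbabilityMeasure μ]
  {ξ : ℕ → Ω → ℝ}

theorem isBigO_tailProb_partialSum (hid : ∀ k, 1 ≤ k → IdentDistrib (ξ k) (ξ 1) μ μ)
    (hT : ∀ x, 0 < tailProb μ (ξ 1) x) (hC : ConsistentlyVaryingTail (tailProb μ (ξ 1)))
    {k : ℕ} (hk : 1 ≤ k) : tailProb μ (partialSum ξ k) =O[atTop] tailProb μ (ξ 1) := by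
  have hk0 : (0 : ℝ) < k := by exact_mod_cast hk
  refine IsBigO.trans ?_ ((hC.isBigO_comp_mul (tailProb_antitone _) hT
    (inv_pos.2 hk0)).const_mul_left (k : ℝ))
  refine IsBigO.of_bound 1 ?_
  filter_upwards [eventually_gt_atTop 0] with x hx
  rw [Real.norm_of_nonneg (tailProb_nonneg x),
    Real.norm_of_nonneg (mul_nonneg hk0.le (tailProb_nonneg _)), one_mul, ← div_eq_inv_mul]
  calc tailProb μ (partialSum ξ k) x ≤ tailProb μ (maxSum ξ k) x :=
        measureReal_mono fun ω (hω : x < _) => hω.trans_le (partialSum_le_maxSum le_rfl ω)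
    _ ≤ k * tailProb μ (ξ 1) (x / k) := tailProb_maxSum_le hid hx k

theorem smallIncrementsWrt_tailProb_partialSum (hξ : ∀ k, Measurable (ξ k))
    (hindep : iIndepFun ξ μ) (hid : ∀ k, 1 ≤ k → IdentDistrib (ξ k) (ξ 1) μ μ)
    (hT : ∀ x, 0 < tailProb μ (ξ 1) x) (hC : ConsistentlyVaryingTail (tailProb μ (ξ 1)))
    {k : ℕ} (hk : 1 ≤ k) : SmallIncrementsWrt (tailProb μ (ξ 1)) (tailProb μ (partialSum ξ k)) := by
  induction k, hk using Nat.le_induction with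
  | base => rw [partialSum_one]; exact hC.smallIncrementsWrt_self hT
  | succ k hk ih =>
    have hind := indepFun_partialSum_succ hξ hindep k
    have hT_eq : tailProb μ (ξ (k + 1)) = tailProb μ (ξ 1) := (hid (k + 1) (by omega)).tailProb_eq
    rw [partialSum_succ]
    refine ih.of_tail_add_bounds hC (tailProb_antitone _) hT (tendsto_tailProb_atTop (hξ 1))
      (isBigO_tailProb_partialSum hid hT hC hk)
      (tendsto_measureReal_neg_le_atTop (μ := μ) (X := ξ (k + 1)))
      (tendsto_measureReal_neg_le_atTop (μ := μ) (X := partialSum ξ k)) (fun w s => ?_)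
      (fun w s => ?_)
    · rw [← hT_eq]
      exact tailProb_add_le hind w s
    · rw [← hT_eq]
      exact le_tailProb_add hind (measurable_partialSum hξ k) (hξ _) w s

theorem smallIncrementsWrt_tailProb_maxSum (hξ : ∀ k, Measurable (ξ k))
    (hindep : iIndepFun ξ μ) (hid : ∀ k, 1 ≤ k → IdentDistrib (ξ k) (ξ 1) μ μ)
    (hT : ∀ x, 0 < tailProb μ (ξ 1) x) (hC : ConsistentlyVaryingTail (tailProb μ (ξ 1)))
    (n : ℕ) : SmallIncrementsWrt (tailProb μ (ξ 1)) (tailProb μ (maxSum ξ n)) :=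
  (SmallIncrementsWrt.sum (fun _ => tailProb_nonneg _) fun _ hk =>
    smallIncrementsWrt_tailProb_partialSum hξ hindep hid hT hC (Finset.mem_Icc.1 hk).1).of_sub_le
    fun _ _ hw hwz => (tailProb_maxSum_sub_le hξ n hw hwz).trans_eq (Finset.sum_sub_distrib _ _)

theorem exists_eventually_tailProb_maxSum_le (hid : ∀ k, 1 ≤ k → IdentDistrib (ξ k) (ξ 1) μ μ)
    (hT : ∀ x, 0 < tailProb μ (ξ 1) x) (hC : ConsistentlyVaryingTail (tailProb μ (ξ 1)))
    {J p : ℝ}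
    (hJ : Tendsto (fun y : ℝ => -((1 / Real.log y) * Real.log (liminf (fun x : ℝ =>
        tailProb μ (ξ 1) (x * y) / tailProb μ (ξ 1) x) atTop))) atTop (𝓝 J))
    (hp : J < p) :
    ∃ K, ∀ᶠ u in 𝓝[<] (1 : ℝ), ∀ᶠ x in atTop, ∀ n : ℕ,
      tailProb μ (maxSum ξ n) (u * x) ≤ K * n ^ (p + 1) * tailProb μ (ξ 1) x := by
  obtain ⟨K, x₁, hx₁, hK⟩ :=
    hC.exists_natCast_mul_le (tailProb_antitone _) hT (fun _ => tailProb_le_one _) hJ hp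
  have hK0 : 0 ≤ K := by
    have h := hK 1 x₁ le_rfl
    rw [Nat.cast_one, div_one, one_mul, Real.one_rpow, mul_one, le_mul_iff_one_le_left (hT x₁)] at h
    linarith
  obtain ⟨K₂, hK₂⟩ := (hC.isBigO_comp_mul (tailProb_antitone _) hT one_half_pos).bound
  refine ⟨K * K₂, ?_⟩
  filter_upwards [Ioo_mem_nhdsLT one_half_lt_one] with u hu
  filter_upwards [hK₂, eventually_ge_atTop (2 * x₁)] with x hx hx₁'
  intro n
  rw [Real.norm_of_nonneg (tailProb_nonneg _), Real.norm_of_nonneg (tailProb_nonneg _)] at hx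
  have hux : x₁ ≤ u * x := by nlinarith [hu.1]
  calc tailProb μ (maxSum ξ n) (u * x) ≤ n * tailProb μ (ξ 1) (u * x / n) :=
        tailProb_maxSum_le hid (hx₁.trans_le hux) n
    _ ≤ K * n ^ (p + 1) * tailProb μ (ξ 1) (u * x) := hK n _ hux
    _ ≤ K * n ^ (p + 1) * (K₂ * tailProb μ (ξ 1) x) := by
        gcongr
        exact (tailProb_antitone _ (by nlinarith [hu.1])).trans hx
    _ = K * K₂ * n ^ (p + 1) * tailProb μ (ξ 1) x := by ring

theorem tailProb_maxSum_stopped_eq_tsum (hξ : ∀ k, Measurable (ξ k)) {η : Ω → ℕ}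
    (hη : Measurable η) (hηindep : IndepFun η (fun ω k => ξ k ω) μ) :
    tailProb μ (fun ω => maxSum ξ (η ω) ω) =
      fun x => ∑' n, μ.real {ω | η ω = n} * tailProb μ (maxSum ξ n) x :=
  -- `maxSum ξ n` is `maxSum (fun k v => v k) n` evaluated along the path `fun k => ξ k ω`.
  funext (tailProb_comp_eq_tsum (g := maxSum fun k v => v k) (V := fun ω k => ξ k ω) hη
    (measurable_pi_lambda _ hξ) (measurable_maxSum fun k => measurable_pi_apply k) hηindep)

theorem smallIncrementsWrt_tailProb_maxSum_stopped (hξ : ∀ k, Measurable (ξ k))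
    (hindep : iIndepFun ξ μ) (hid : ∀ k, 1 ≤ k → IdentDistrib (ξ k) (ξ 1) μ μ)
    (hT : ∀ x, 0 < tailProb μ (ξ 1) x) (hC : ConsistentlyVaryingTail (tailProb μ (ξ 1)))
    {J p : ℝ}
    (hJ : Tendsto (fun y : ℝ => -((1 / Real.log y) * Real.log (liminf (fun x : ℝ =>
        tailProb μ (ξ 1) (x * y) / tailProb μ (ξ 1) x) atTop))) atTop (𝓝 J))
    (hp : J < p) {η : Ω → ℕ} (hη : Measurable η) (hηindep : IndepFun η (fun ω k => ξ k ω) μ)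
    (hmoment : Summable fun n : ℕ => (n : ℝ) ^ (p + 1) * μ.real {ω | η ω = n}) :
    SmallIncrementsWrt (tailProb μ (ξ 1)) (tailProb μ fun ω => maxSum ξ (η ω) ω) := by
  obtain ⟨K, hdom⟩ := exists_eventually_tailProb_maxSum_le hid hT hC hJ hp
  rw [tailProb_maxSum_stopped_eq_tsum hξ hη hηindep]
  refine SmallIncrementsWrt.tsum (fun _ => tailProb_nonneg _)
    (fun n => (smallIncrementsWrt_tailProb_maxSum hξ hindep hid hT hC n).const_mul
      (fun _ => tailProb_nonneg _) measureReal_nonneg)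
    (fun n x => mul_nonneg measureReal_nonneg (tailProb_nonneg x))
    (fun x => (summable_measureReal_setOf_eq hη).of_nonneg_of_le
      (fun n => mul_nonneg measureReal_nonneg (tailProb_nonneg x))
      fun n => mul_le_of_le_one_right measureReal_nonneg (tailProb_le_one x))
    (hmoment.mul_left K) ?_
  filter_upwards [hdom] with u hu
  filter_upwards [hu] with x hx n
  calc μ.real {ω | η ω = n} * tailProb μ (maxSum ξ n) (u * x)
      ≤ μ.real {ω | η ω = n} * (K * n ^ (p + 1) * tailProb μ (ξ 1) x) := by gcongr; exact hx n
    _ = K * (n ^ (p + 1) * μ.real {ω | η ω = n}) * tailProb μ (ξ 1) x := by ring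

end RandomWalk

/-- Corollary 2: for i.i.d. random variables with common d.f. `F_ξ ∈ 𝒞` and a counting
random variable `η` with `E η^{p+1} < ∞` for some `p > J⁺_{F_ξ}`, the randomly stopped
maximum of sums has a consistently varying tail. -/
theorem randomly_stopped_maximum_of_sums_cvar_iid
    {Ω : Type*} [MeasurableSpace Ω] (μ : Measure Ω) [IsProbabilityMeasure μ]
    (ξ : ℕ → Ω → ℝ) (hmeas : ∀ k, Measurable (ξ k))
    (hindep : iIndepFun ξ μ)
    (hident : ∀ k : ℕ, 1 ≤ k → Measure.map (ξ k) μ = Measure.map (ξ 1) μ)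
    (η : Ω → ℕ) (hηmeas : Measurable η)
    (hηnondeg : μ {ω | η ω = 0} ≠ 1)
    (hηindep : IndepFun η (fun ω => fun k => ξ k ω) μ)
    (hpos : ∀ x : ℝ, 0 < (μ {ω | ξ 1 ω > x}).toReal)
    (hC : ConsistentlyVaryingTail (fun x => (μ {ω | ξ 1 ω > x}).toReal))
    (J p : ℝ)
    (hJ : Tendsto (fun y : ℝ =>
        -((1 / Real.log y) * Real.log (liminf (fun x : ℝ =>
          (μ {ω | ξ 1 ω > x * y}).toReal / (μ {ω | ξ 1 ω > x}).toReal) atTop)))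
      atTop (nhds J))
    (hp : J < p)
    (hmoment : Summable (fun n : ℕ => (n : ℝ) ^ (p + 1) * (μ {ω | η ω = n}).toReal)) :
    ConsistentlyVaryingTail (fun x => (μ {ω | maxSum ξ (η ω) ω > x}).toReal) := by
  have hid : ∀ k, 1 ≤ k → IdentDistrib (ξ k) (ξ 1) μ μ := fun k hk =>
    ⟨(hmeas k).aemeasurable, (hmeas 1).aemeasurable, hident k hk⟩
  exact consistentlyVaryingTail_of_smallIncrementsWrt (tailProb_antitone _) hpos
    (measureReal_compl_pos (hηmeas (measurableSet_singleton 0)) hηnondeg)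
    (measureReal_ne_zero_mul_tailProb_le (hηindep.comp measurable_id (measurable_pi_apply 1)))
    (smallIncrementsWrt_tailProb_maxSum_stopped hmeas hindep hid hpos hC hJ hp hηmeas hηindep
      hmoment)
end

section
/- Let ξ = (1+U)·2^G where U and G are independent, U is uniformly distributed on [0,1], and G is geometric with parameter q ∈ (0,1) (P(G = l) = (1−q)q^l for l = 0,1,2,…). Then the distribution function of ξ has a consistently varying tail but does not have a regularly varying tail. -/
/-!
For `t ∈ [1, 2]` one computes `P(ξ > t 2^m) = q^m (2 - q - (1 - q) t)`: the tail is linear on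
each dyadic block and is multiplied by `q` from one block to the next.

Regular variation fails because the ratio `F̄(3x/2) / F̄(x)` equals `(1 + q)/2` along `x = 2^l` but
`3q/(2 + q)` along `x = (4/3) 2^l`.

Consistent variation holds because on a block the relative slope of `F̄` is bounded: Bernoulli's
inequality gives `F̄(s 2^m) ≤ (t/s)^k F̄(t 2^m)` for `1 ≤ s ≤ t ≤ 2` as soon as `k q ≥ 2`. Chaining
at most two blocks, `1 ≤ F̄(xy)/F̄(x) ≤ y^(-k)` for `y ∈ [1/2, 1]` and `x ≥ 2`, and `y^(-k) → 1`.
-/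

open Filter MeasureTheory ProbabilityTheory

open Topology

lemma lt_one_add_mul_two_pow_iff {u t : ℝ} (hu : u ∈ Set.Icc (0 : ℝ) 1)
    (ht : t ∈ Set.Ico (1 : ℝ) 2) (m g : ℕ) :
    t * 2 ^ m < (1 + u) * 2 ^ g ↔ m < g ∨ (t - 1 < u ∧ g = m) := by
  obtain ⟨hu0, hu1⟩ := hu
  obtain ⟨ht1, ht2⟩ := ht
  have h2m : (0 : ℝ) < 2 ^ m := by positivity
  rcases lt_trichotomy g m with hgm | rfl | hmg
  · have : (2 : ℝ) ^ (g + 1) ≤ 2 ^ m := pow_le_pow_right₀ one_le_two hgm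
    rw [pow_succ] at this
    constructor
    · intro h; nlinarith
    · rintro (h | ⟨-, h⟩) <;> omega
  · simp only [lt_irrefl, and_true, false_or]
    constructor <;> intro h <;> nlinarith
  · have : (2 : ℝ) ^ (m + 1) ≤ 2 ^ g := pow_le_pow_right₀ one_le_two hmg
    rw [pow_succ] at this
    simp only [hmg, true_or, iff_true]
    nlinarith

section Distributions

variable {Ω : Type*} [MeasurableSpace Ω] {μ : Measure Ω}

lemma measureReal_lt_of_uniform {U : Ω → ℝ} (hU : Measurable U)
    (hUlaw : μ.map U = volume.restrict (Set.Icc (0 : ℝ) 1)) {s : ℝ} (hs : s ∈ Set.Icc (0 : ℝ) 1) :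
    μ.real {ω | s < U ω} = 1 - s := by
  have hIoc : Set.Ioi s ∩ Set.Icc 0 1 = Set.Ioc s 1 := by
    ext x
    simp only [Set.mem_inter_iff, Set.mem_Ioi, Set.mem_Icc, Set.mem_Ioc]
    constructor
    · rintro ⟨h1, -, h2⟩; exact ⟨h1, h2⟩
    · rintro ⟨h1, h2⟩; exact ⟨h1, hs.1.trans h1.le, h2⟩
  calc μ.real {ω | s < U ω} = (μ.map U).real (Set.Ioi s) :=
        (map_measureReal_apply hU measurableSet_Ioi).symm
    _ = 1 - s := by
      rw [hUlaw, measureReal_restrict_apply measurableSet_Ioi, hIoc,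
        Real.volume_real_Ioc_of_le hs.2]

lemma measureReal_lt_of_geometric [IsProbabilityMeasure μ] {G : Ω → ℕ} (hG : Measurable G)
    {q : ℝ} (hq : q ∈ Set.Ioo (0 : ℝ) 1)
    (hGlaw : ∀ l : ℕ, μ {ω | G ω = l} = ENNReal.ofReal ((1 - q) * q ^ l)) (m : ℕ) :
    μ.real {ω | m < G ω} = q ^ (m + 1) := by
  have hcompl : {ω | m < G ω}ᶜ = G ⁻¹' ↑(Finset.range (m + 1)) := by
    ext ω
    simp only [Set.mem_compl_iff, Set.mem_ofPred_eq, Finset.coe_range, Set.mem_preimage,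
      Set.mem_Iio]
    omega
  have hfiber : ∀ l : ℕ, μ.real (G ⁻¹' {l}) = (1 - q) * q ^ l := fun l => by
    change (μ {ω | G ω = l}).toReal = _
    rw [hGlaw, ENNReal.toReal_ofReal (mul_nonneg (sub_nonneg.2 hq.2.le) (pow_nonneg hq.1.le l))]
  have hle : μ.real {ω | m < G ω}ᶜ = 1 - q ^ (m + 1) := by
    rw [hcompl, ← sum_measureReal_preimage_singleton _ fun l _ => hG (measurableSet_singleton l),
      Finset.sum_congr rfl fun l _ => hfiber l, ← Finset.mul_sum, mul_neg_geom_sum]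
  have hmeas : MeasurableSet {ω | m < G ω} := hG measurableSet_Ioi
  rw [probReal_compl_eq_one_sub hmeas] at hle
  linarith

lemma measureReal_tail_eq [IsProbabilityMeasure μ] {U : Ω → ℝ} {G : Ω → ℕ}
    (hU : Measurable U) (hG : Measurable G) (hUG : IndepFun U G μ)
    (hUlaw : μ.map U = volume.restrict (Set.Icc (0 : ℝ) 1)) {q : ℝ} (hq : q ∈ Set.Ioo (0 : ℝ) 1)
    (hGlaw : ∀ l : ℕ, μ {ω | G ω = l} = ENNReal.ofReal ((1 - q) * q ^ l))
    (m : ℕ) {t : ℝ} (ht : t ∈ Set.Ico (1 : ℝ) 2) :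
    μ.real {ω | t * 2 ^ m < (1 + U ω) * 2 ^ G ω} = q ^ m * (2 - q - (1 - q) * t) := by
  have hU01 : ∀ᵐ ω ∂μ, U ω ∈ Set.Icc (0 : ℝ) 1 :=
    ae_of_ae_map hU.aemeasurable (hUlaw ▸ ae_restrict_mem measurableSet_Icc)
  have hsplit : {ω | t * 2 ^ m < (1 + U ω) * 2 ^ G ω}
      =ᵐ[μ] ({ω | m < G ω} ∪ ({ω | t - 1 < U ω} ∩ {ω | G ω = m}) : Set Ω) :=
    eventuallyEq_set.2 <| hU01.mono fun ω hω => lt_one_add_mul_two_pow_iff hω ht m (G ω)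
  have hdisj : Disjoint {ω | m < G ω} ({ω | t - 1 < U ω} ∩ {ω | G ω = m}) :=
    Set.disjoint_left.2 fun ω hlt ⟨_, heq⟩ => (ne_of_gt hlt) heq
  have hindep : μ.real ({ω | t - 1 < U ω} ∩ {ω | G ω = m})
      = μ.real {ω | t - 1 < U ω} * μ.real {ω | G ω = m} := by
    simp only [measureReal_def, ← ENNReal.toReal_mul]
    exact congrArg ENNReal.toReal
      (hUG.measure_inter_preimage_eq_mul _ _ measurableSet_Ioi (measurableSet_singleton m))
  have hmeas : MeasurableSet ({ω | t - 1 < U ω} ∩ {ω | G ω = m}) :=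
    (hU measurableSet_Ioi).inter (hG (measurableSet_singleton m))
  rw [measureReal_congr hsplit, measureReal_union hdisj hmeas, hindep,
    measureReal_lt_of_geometric hG hq hGlaw,
    measureReal_lt_of_uniform hU hUlaw ⟨by linarith [ht.1], by linarith [ht.2]⟩, measureReal_def,
    hGlaw, ENNReal.toReal_ofReal (mul_nonneg (sub_nonneg.2 hq.2.le) (pow_nonneg hq.1.le m))]
  ring

end Distributions

lemma exists_eq_mul_two_pow {x : ℝ} (hx : 1 ≤ x) :
    ∃ (m : ℕ), ∃ t ∈ Set.Ico (1 : ℝ) 2, x = t * 2 ^ m := by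
  obtain ⟨m, hle, hlt⟩ := exists_nat_pow_near hx one_lt_two
  have h2m : (0 : ℝ) < 2 ^ m := by positivity
  refine ⟨m, x / 2 ^ m, ⟨(le_div_iff₀ h2m).2 (by linarith), (div_lt_iff₀ h2m).2 ?_⟩,
    (div_mul_cancel₀ x h2m.ne').symm⟩
  rwa [pow_succ, mul_comm] at hlt

def DyadicTail (q : ℝ) (T : ℝ → ℝ) : Prop :=
  ∀ (m : ℕ), ∀ t ∈ Set.Icc (1 : ℝ) 2, T (t * 2 ^ m) = q ^ m * (2 - q - (1 - q) * t)

namespace DyadicTail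

variable {q : ℝ} {T : ℝ → ℝ}

lemma of_Ico
    (hT : ∀ (m : ℕ), ∀ t ∈ Set.Ico (1 : ℝ) 2, T (t * 2 ^ m) = q ^ m * (2 - q - (1 - q) * t)) :
    DyadicTail q T := by
  rintro m t ⟨ht1, ht2⟩
  rcases ht2.lt_or_eq with ht2 | rfl
  · exact hT m t ⟨ht1, ht2⟩
  · calc T (2 * 2 ^ m) = T (1 * 2 ^ (m + 1)) := by rw [pow_succ]; ring_nf
      _ = q ^ m * (2 - q - (1 - q) * 2) := by rw [hT (m + 1) 1 ⟨le_rfl, one_lt_two⟩]; ring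

lemma pos (hT : DyadicTail q T) (hq : q ∈ Set.Ioo (0 : ℝ) 1) {x : ℝ} (hx : 1 ≤ x) :
    0 < T x := by
  obtain ⟨m, t, ⟨ht1, ht2⟩, rfl⟩ := exists_eq_mul_two_pow hx
  rw [hT m t ⟨ht1, ht2.le⟩]
  exact mul_pos (pow_pos hq.1 m) (by nlinarith [hq.1, hq.2])

lemma le_div_pow_mul (hT : DyadicTail q T) (hq : q ∈ Set.Ioo (0 : ℝ) 1) {k : ℕ} (hk : 2 ≤ k * q)
    (m : ℕ) {s t : ℝ} (hs : 1 ≤ s) (hst : s ≤ t) (ht : t ≤ 2) :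
    T (s * 2 ^ m) ≤ (t / s) ^ k * T (t * 2 ^ m) := by
  obtain ⟨hq0, hq1⟩ := hq
  rw [hT m s ⟨hs, hst.trans ht⟩, hT m t ⟨hs.trans hst, ht⟩, mul_left_comm]
  refine mul_le_mul_of_nonneg_left ?_ (pow_nonneg hq0.le m)
  have hbern : 1 + k * (t / s - 1) ≤ (t / s) ^ k := by
    have hone : 1 ≤ t / s := (one_le_div (by linarith)).2 hst
    simpa using one_add_mul_le_pow (a := t / s - 1) (by linarith) k
  have hgap : (t - s) * (1 - q) ≤ k * (t / s - 1) * (2 - q - (1 - q) * t) := by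
    have hts : (t - s) / 2 ≤ t / s - 1 := by
      rw [div_sub_one (by positivity)]
      exact div_le_div_of_nonneg_left (by linarith) (by linarith) (hst.trans ht)
    have hf : q ≤ 2 - q - (1 - q) * t := by nlinarith
    calc (t - s) * (1 - q) ≤ (t - s) * (k * q / 2) :=
          mul_le_mul_of_nonneg_left (by linarith) (by linarith)
      _ = k * ((t - s) / 2) * q := by ring
      _ ≤ k * (t / s - 1) * (2 - q - (1 - q) * t) :=
          mul_le_mul (mul_le_mul_of_nonneg_left hts k.cast_nonneg) hf hq0.le
            (mul_nonneg k.cast_nonneg (by linarith))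
  calc 2 - q - (1 - q) * s = (2 - q - (1 - q) * t) + (t - s) * (1 - q) := by ring
    _ ≤ (1 + k * (t / s - 1)) * (2 - q - (1 - q) * t) := by linarith
    _ ≤ (t / s) ^ k * (2 - q - (1 - q) * t) :=
      mul_le_mul_of_nonneg_right hbern (by nlinarith)

lemma mul_le_inv_pow_mul (hT : DyadicTail q T) (hq : q ∈ Set.Ioo (0 : ℝ) 1) {k : ℕ}
    (hk : 2 ≤ k * q) {x y : ℝ} (hx : 2 ≤ x) (hy : y ∈ Set.Icc (1 / 2 : ℝ) 1) :
    T (x * y) ≤ y⁻¹ ^ k * T x := by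
  obtain ⟨hy1, hy2⟩ := hy
  obtain ⟨m, t, ⟨ht1, ht2⟩, hxt⟩ := exists_eq_mul_two_pow (show 1 ≤ x / 2 by linarith)
  have hx : x = t * 2 ^ (m + 1) := by rw [pow_succ]; linarith
  subst hx
  rcases le_or_gt 1 (t * y) with hty | hty
  · calc T (t * 2 ^ (m + 1) * y) = T ((t * y) * 2 ^ (m + 1)) := by ring_nf
      _ ≤ (t / (t * y)) ^ k * T (t * 2 ^ (m + 1)) :=
          le_div_pow_mul hT hq hk _ hty (by nlinarith) ht2.le
      _ = y⁻¹ ^ k * T (t * 2 ^ (m + 1)) := by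
          rw [div_mul_cancel_left₀ (by positivity)]
  · -- the segment from `x * y` to `x` crosses `2 ^ (m + 1)`
    calc T (t * 2 ^ (m + 1) * y) = T ((2 * t * y) * 2 ^ m) := by ring_nf
      _ ≤ (2 / (2 * t * y)) ^ k * T (2 * 2 ^ m) :=
          le_div_pow_mul hT hq hk _ (by nlinarith) (by nlinarith) le_rfl
      _ = (t * y)⁻¹ ^ k * T (1 * 2 ^ (m + 1)) := by
          congr 2
          · field_simp
          · ring_nf
      _ ≤ (t * y)⁻¹ ^ k * ((t / 1) ^ k * T (t * 2 ^ (m + 1))) :=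
          mul_le_mul_of_nonneg_left (le_div_pow_mul hT hq hk _ le_rfl ht1 ht2.le) (by positivity)
      _ = y⁻¹ ^ k * T (t * 2 ^ (m + 1)) := by
          rw [div_one, ← mul_assoc, ← mul_pow, mul_inv, mul_right_comm,
            inv_mul_cancel₀ (by positivity), one_mul]

lemma consistentlyVaryingTail (hT : DyadicTail q T) (hq : q ∈ Set.Ioo (0 : ℝ) 1)
    (hanti : Antitone T) : ConsistentlyVaryingTail T := by
  obtain ⟨k, hk⟩ := exists_nat_gt (2 / q)
  have hkq : 2 ≤ k * q := (div_le_iff₀ hq.1).1 hk.le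
  have hratio : ∀ y ∈ Set.Ico (1 / 2 : ℝ) 1, (∀ᶠ x in atTop, 1 ≤ T (x * y) / T x) ∧
      ∀ᶠ x in atTop, T (x * y) / T x ≤ y⁻¹ ^ k := by
    rintro y ⟨hy1, hy2⟩
    have hTx : ∀ᶠ x in atTop, 0 < T x :=
      eventually_atTop.2 ⟨1, fun x hx => hT.pos hq hx⟩
    constructor
    · filter_upwards [hTx, eventually_ge_atTop 0] with x hTx hx
      exact (one_le_div hTx).2 (hanti (by nlinarith))
    · filter_upwards [hTx, eventually_ge_atTop 2] with x hTx hx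
      exact (div_le_iff₀ hTx).2 (hT.mul_le_inv_pow_mul hq hkq hx ⟨hy1, hy2.le⟩)
  have hpow : Tendsto (fun y : ℝ => y⁻¹ ^ k) (𝓝[<] 1) (𝓝 1) := by
    simpa using ((tendsto_inv₀ (one_ne_zero' ℝ)).pow k).mono_left nhdsWithin_le_nhds
  refine tendsto_of_tendsto_of_tendsto_of_le_of_le' tendsto_const_nhds hpow ?_ ?_ <;>
    filter_upwards [Ico_mem_nhdsLT (by norm_num : (1 / 2 : ℝ) < 1)] with y hy <;>
    obtain ⟨hlow, hup⟩ := hratio y hy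
  · exact le_limsup_of_frequently_le hlow.frequently (isBoundedUnder_of_eventually_le hup)
  · exact limsup_le_of_le (IsCoboundedUnder.of_frequently_ge hlow.frequently) hup

lemma eq_of_tendsto_div (hT : DyadicTail q T) (hq : 0 < q) {y c : ℝ}
    (hc : Tendsto (fun x => T (x * y) / T x) atTop (𝓝 c)) {t : ℝ} (ht : t ∈ Set.Icc (1 : ℝ) 2)
    (hty : t * y ∈ Set.Icc (1 : ℝ) 2) :
    c = (2 - q - (1 - q) * (t * y)) / (2 - q - (1 - q) * t) := by
  have hseq : Tendsto (fun l : ℕ => t * 2 ^ l) atTop atTop :=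
    (tendsto_pow_atTop_atTop_of_one_lt one_lt_two).const_mul_atTop (by linarith [ht.1])
  refine tendsto_nhds_unique (hc.comp hseq) (tendsto_const_nhds.congr fun l => ?_)
  have hql : q ^ l ≠ 0 := pow_ne_zero l hq.ne'
  simp only [Function.comp_apply, mul_right_comm t, hT l _ hty, hT l t ht,
    mul_div_mul_left _ _ hql]

lemma not_tendsto_div (hT : DyadicTail q T) (hq : q ∈ Set.Ioo (0 : ℝ) 1) (c : ℝ) :
    ¬ Tendsto (fun x => T (x * (3 / 2)) / T x) atTop (𝓝 c) := by
  intro hc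
  obtain ⟨hq0, hq1⟩ := hq
  have h₁ := hT.eq_of_tendsto_div hq0 hc (t := 1) (by norm_num) (by norm_num)
  have h₂ := hT.eq_of_tendsto_div hq0 hc (t := 4 / 3) (by norm_num) (by norm_num)
  rw [h₁] at h₂
  rw [div_eq_div_iff (by nlinarith) (by nlinarith)] at h₂
  nlinarith [mul_pos (sub_pos.2 hq1) (by linarith : (0 : ℝ) < 2 - q)]

end DyadicTail

/-- For `ξ = (1+U)·2^G` with `U` uniform on `[0,1]` and `G` geometric with parameter
`q ∈ (0,1)`, independent, the distribution function of `ξ` has a consistently varying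
tail but not a regularly varying tail. -/
theorem cvar_not_rvar_example
    {Ω : Type*} [MeasurableSpace Ω] (μ : Measure Ω) [IsProbabilityMeasure μ]
    (U : Ω → ℝ) (G : Ω → ℕ) (hU : Measurable U) (hG : Measurable G)
    (hUG : IndepFun U G μ)
    (hUlaw : Measure.map U μ = MeasureTheory.volume.restrict (Set.Icc (0 : ℝ) 1))
    (q : ℝ) (hq : q ∈ Set.Ioo (0 : ℝ) 1)
    (hGlaw : ∀ l : ℕ, μ {ω | G ω = l} = ENNReal.ofReal ((1 - q) * q ^ l)) :
    ConsistentlyVaryingTail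
        (fun x => (μ {ω | (1 + U ω) * 2 ^ (G ω) > x}).toReal) ∧
      ¬ ∃ α : ℝ, 0 ≤ α ∧ ∀ y : ℝ, 0 < y →
        Tendsto (fun x : ℝ =>
            (μ {ω | (1 + U ω) * 2 ^ (G ω) > x * y}).toReal /
              (μ {ω | (1 + U ω) * 2 ^ (G ω) > x}).toReal)
          atTop (nhds (y ^ (-α))) := by
  have hT : DyadicTail q fun x => (μ {ω | (1 + U ω) * 2 ^ (G ω) > x}).toReal :=
    DyadicTail.of_Ico fun m _ ht => measureReal_tail_eq hU hG hUG hUlaw hq hGlaw m ht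
  have hanti : Antitone fun x => (μ {ω | (1 + U ω) * 2 ^ (G ω) > x}).toReal :=
    fun _ _ hxx' => ENNReal.toReal_mono (measure_ne_top μ _)
      (measure_mono fun _ h => lt_of_le_of_lt hxx' h)
  exact ⟨hT.consistentlyVaryingTail hq hanti,
    fun ⟨_, _, hlim⟩ => hT.not_tendsto_div hq _ (hlim (3 / 2) (by norm_num))⟩
end
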